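/- arXiv:2105.06015 — 4 statements merged into one kernel-verified Lean document; each statement's English description precedes it below -/
import Mathlib

section
/- Suppose E[F(w_{t+1}) - F(w_t)] ≤ -η·μ·E[F(w_t) - F_*] + η²σ²L/2 holds for each t = 0,…,n-1, with 0 < ημ ≤ 1. Then E[F(w_n) - F_*] ≤ exp(-ημn)·(F(w_0) - F_*) + ησ²L/(2μ). -/
open Real

/-- If `e_t := E[F(w_t)] - F_* ≥ 0` satisfies `e_{t+1} ≤ (1-ημ)e_t + η²σ²L/2`
for `t = 0,…,n-1` with `0 < ημ ≤ 1`, then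
`e_n ≤ exp(-ημn) e_0 + ησ²L/(2μ)`. -/
theorem sgd_expected_recursion (e : ℕ → ℝ) (η μ σ L : ℝ) (n : ℕ)
    (hη : 0 < η) (hμ : 0 < μ) (hσ : 0 < σ) (hL : 0 < L)
    (hημ0 : 0 < η * μ) (hημ1 : η * μ ≤ 1)
    (he : ∀ t, 0 ≤ e t)
    (hrec : ∀ t < n, e (t + 1) ≤ (1 - η * μ) * e t + η ^ 2 * σ ^ 2 * L / 2) :
    e n ≤ Real.exp (-η * μ * n) * e 0 + η * σ ^ 2 * L / (2 * μ) := by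
  set a := η * μ with ha
  set B := η * σ ^ 2 * L / (2 * μ) with hB
  have ha1 : 0 ≤ 1 - a := by linarith
  have hconst : η ^ 2 * σ ^ 2 * L / 2 = a * B := by
    rw [hB, ha]; field_simp
  have key : ∀ m ≤ n, e m ≤ (1 - a) ^ m * e 0 + B := by
    intro m hm
    induction m with
    | zero => simp; positivity
    | succ t ih =>
      have ht : t < n := Nat.lt_of_succ_le hm
      have h1 := hrec t ht
      have h2 := ih (le_of_lt ht)
      calc e (t + 1) ≤ (1 - a) * e t + a * B := by rw [← hconst]; exact h1
        _ ≤ (1 - a) * ((1 - a) ^ t * e 0 + B) + a * B := by nlinarith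
        _ = (1 - a) ^ (t + 1) * e 0 + B := by ring
  have hexp : (1 - a) ^ n ≤ Real.exp (-η * μ * n) := by
    have h1 : 1 - a ≤ Real.exp (-a) := by
      have := Real.add_one_le_exp (-a); linarith
    calc (1 - a) ^ n ≤ (Real.exp (-a)) ^ n := pow_le_pow_left₀ ha1 h1 n
      _ = Real.exp (-η * μ * n) := by rw [← Real.exp_nat_mul, ha]; ring_nf
  have := key n le_rfl
  have h0 := he 0
  nlinarith [mul_le_mul_of_nonneg_right hexp h0]
end

section
/- Let F be L-smooth and satisfy the PL condition with constant μ > 0 and F_* = 0. Consider the deterministic recursion in expectation: with step size η = (1/(μn))·log(nμ²F(w_0)/(σ²L)) where this quantity satisfies ηL ≤ 1, the SGD expected-value recursion e_{t+1} ≤ (1-ημ)e_t + η²σ²L/2 with e_0 = F(w_0) yields e_n ≤ σ²L·log(nμ²F(w_0)/(σ²L))/(μ²n) + small terms, i.e., e_n ≤ C·σ²L·log(n)/(μ²n) for a suitable constant C depending on F(w_0), μ, σ, L (for n large enough). -/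
set_option maxHeartbeats 1000000


open Real

/-- Theorem 1 (first epoch), reduced to the explicit recursion computation:
with the stated step size `η = (1/(μn)) log(nμ²F(w_0)/(σ²L))`, the SGD
expected-value recursion `e_{t+1} ≤ (1-ημ)e_t + η²σ²L/2` with `e_0 = F(w_0)`
yields `e_n ≤ C σ²L log n/(μ²n)` for a suitable constant `C` depending only on
`F(w_0), μ, σ, L` (for `n` large enough). -/
theorem one_pass_sgd_rate (μ σ L F0 : ℝ)
    (hμ : 0 < μ) (hσ : 0 < σ) (hL : 0 < L) (hF0 : 0 < F0) :
    ∃ C > (0 : ℝ), ∀ n : ℕ, 2 ≤ n →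
      (n : ℝ) * μ ^ 2 * F0 > σ ^ 2 * L →
      ∀ e : ℕ → ℝ, (∀ t, 0 ≤ e t) → e 0 = F0 →
      ∀ η : ℝ, η = 1 / (μ * n) * Real.log ((n : ℝ) * μ ^ 2 * F0 / (σ ^ 2 * L)) →
      η * L ≤ 1 →
      (∀ t < n, e (t + 1) ≤ (1 - η * μ) * e t + η ^ 2 * σ ^ 2 * L / 2) →
      e n ≤ C * (σ ^ 2 * L * Real.log n / (μ ^ 2 * n)) := by
  have hlog2 : (0:ℝ) < Real.log 2 := Real.log_pos (by norm_num)
  set c : ℝ := max 0 (Real.log (μ ^ 2 * F0 / (σ ^ 2 * L))) with hc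
  have hc0 : 0 ≤ c := le_max_left _ _
  refine ⟨1 / Real.log 2 + (1 + c / Real.log 2) * (1 + μ / L) / 2, by positivity, ?_⟩
  intro n hn hA e he he0 η hη hηL hrec
  have hn0 : (0:ℝ) < (n:ℝ) := by
    have : (0:ℕ) < n := by omega
    exact_mod_cast this
  set A : ℝ := (n : ℝ) * μ ^ 2 * F0 / (σ ^ 2 * L) with hAdef
  have hσL : (0:ℝ) < σ ^ 2 * L := by positivity
  have hA1 : 1 < A := (one_lt_div hσL).mpr hA
  have hApos : 0 < A := lt_trans one_pos hA1
  have hlogA : 0 < Real.log A := Real.log_pos hA1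
  have hηpos : 0 < η := by
    rw [hη]
    positivity
  -- log A = log n + log(μ²F0/(σ²L)) ≤ log n + c
  have hlogA_split : Real.log A = Real.log n + Real.log (μ ^ 2 * F0 / (σ ^ 2 * L)) := by
    have : A = (n : ℝ) * (μ ^ 2 * F0 / (σ ^ 2 * L)) := by
      rw [hAdef]; ring
    rw [this, Real.log_mul (ne_of_gt hn0) (by positivity)]
  have hlogn : Real.log 2 ≤ Real.log n := by
    apply Real.log_le_log (by norm_num)
    exact_mod_cast hn
  have hlogn0 : 0 < Real.log n := lt_of_lt_of_le hlog2 hlogn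
  have hlogA_le : Real.log A ≤ (1 + c / Real.log 2) * Real.log n := by
    have h1 : Real.log (μ ^ 2 * F0 / (σ ^ 2 * L)) ≤ c := le_max_right _ _
    have h2 : c ≤ c / Real.log 2 * Real.log n := by
      rw [div_mul_eq_mul_div, le_div_iff₀ hlog2]
      nlinarith
    nlinarith [hlogA_split]
  -- η μ n = log A
  have hημn : η * μ * (n : ℝ) = Real.log A := by
    rw [hη]; field_simp
  set S : ℝ := η * σ ^ 2 * L / (2 * μ) with hS
  rcases le_or_gt (η * μ) 1 with hcase | hcase
  · -- contraction case: e t ≤ (1-ημ)^t F0 + S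
    have h1ημ : 0 ≤ 1 - η * μ := by linarith
    have key : ∀ t, t ≤ n → e t ≤ (1 - η * μ) ^ t * F0 + S := by
      intro t
      induction t with
      | zero => intro _; rw [he0]; simp; positivity
      | succ t ih =>
        intro ht
        have ht' : t < n := by omega
        have ih' := ih (le_of_lt ht')
        have hb := hrec t ht'
        have hmul : (1 - η * μ) * e t ≤ (1 - η * μ) * ((1 - η * μ) ^ t * F0 + S) :=
          mul_le_mul_of_nonneg_left ih' h1ημ
        have hpow : (1 - η * μ) ^ (t + 1) = (1 - η * μ) * (1 - η * μ) ^ t := by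
          ring
        have hSrec : (1 - η * μ) * S + η ^ 2 * σ ^ 2 * L / 2 ≤ S := by
          have hid : η * μ * S = η ^ 2 * σ ^ 2 * L / 2 := by
            rw [hS]; field_simp
          nlinarith [hid]
        calc e (t + 1) ≤ (1 - η * μ) * e t + η ^ 2 * σ ^ 2 * L / 2 := hb
          _ ≤ (1 - η * μ) * ((1 - η * μ) ^ t * F0 + S) + η ^ 2 * σ ^ 2 * L / 2 := by linarith
          _ = (1 - η * μ) ^ (t + 1) * F0 + ((1 - η * μ) * S + η ^ 2 * σ ^ 2 * L / 2) := by
            rw [hpow]; ring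
          _ ≤ (1 - η * μ) ^ (t + 1) * F0 + S := by linarith
    have hend := key n le_rfl
    -- (1-ημ)^n ≤ exp(-ημ n) = 1/A
    have hpow : (1 - η * μ) ^ n ≤ 1 / A := by
      have h1 : 1 - η * μ ≤ Real.exp (-(η * μ)) := by
        have := Real.add_one_le_exp (-(η * μ))
        linarith
      have h2 : (1 - η * μ) ^ n ≤ (Real.exp (-(η * μ))) ^ n :=
        pow_le_pow_left₀ h1ημ h1 n
      have h3 : (Real.exp (-(η * μ))) ^ n = Real.exp (-(η * μ * n)) := by
        rw [← Real.exp_nat_mul]; ring_nf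
      rw [h3, hημn] at h2
      rw [Real.exp_neg, Real.exp_log hApos, ← one_div] at h2
      exact h2
    have hF0A : 1 / A * F0 = σ ^ 2 * L / (μ ^ 2 * (n : ℝ)) := by
      rw [hAdef]; field_simp
    have hSval : S = Real.log A * (σ ^ 2 * L) / (2 * μ ^ 2 * (n : ℝ)) := by
      rw [hS, hη]; field_simp
    have h1 : e n ≤ σ ^ 2 * L / (μ ^ 2 * (n : ℝ))
        + Real.log A * (σ ^ 2 * L) / (2 * μ ^ 2 * (n : ℝ)) := by
      have := mul_le_mul_of_nonneg_right hpow (le_of_lt hF0)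
      rw [hF0A] at this
      rw [hSval] at hend
      linarith
    have hbase : (0:ℝ) < σ ^ 2 * L / (μ ^ 2 * (n : ℝ)) := by positivity
    have hμL : 0 ≤ μ / L := by positivity
    set B : ℝ := σ ^ 2 * L / (μ ^ 2 * (n : ℝ)) with hB
    have hB0 : 0 ≤ B := le_of_lt hbase
    have e2 : Real.log A * (σ ^ 2 * L) / (2 * μ ^ 2 * (n : ℝ))
        = Real.log A / 2 * B := by rw [hB]; field_simp
    rw [e2] at h1
    have hb2 : Real.log A / 2 * B ≤ (1 + c / Real.log 2) * Real.log n / 2 * B :=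
      mul_le_mul_of_nonneg_right (by linarith) hB0
    have hb3 : B ≤ 1 / Real.log 2 * (Real.log n * B) := by
      have e1 : (1:ℝ) ≤ Real.log n / Real.log 2 := (one_le_div hlog2).mpr hlogn
      have := mul_le_mul_of_nonneg_right e1 hB0
      rw [one_mul] at this
      calc B ≤ Real.log n / Real.log 2 * B := this
        _ = 1 / Real.log 2 * (Real.log n * B) := by ring
    have hcc : 0 ≤ 1 + c / Real.log 2 := by positivity
    have hextra : 0 ≤ (1 + c / Real.log 2) * (μ / L) / 2 * (Real.log n * B) := by
      apply mul_nonneg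
      · positivity
      · exact mul_nonneg (le_of_lt hlogn0) hB0
    have hq : σ ^ 2 * L * Real.log ↑n / (μ ^ 2 * ↑n) = Real.log n * B := by
      rw [hB]; field_simp
    rw [hq]
    have hfin : (1 / Real.log 2 + (1 + c / Real.log 2) * (1 + μ / L) / 2) * (Real.log n * B)
        = 1 / Real.log 2 * (Real.log n * B) + (1 + c / Real.log 2) * Real.log n / 2 * B
          + (1 + c / Real.log 2) * (μ / L) / 2 * (Real.log n * B) := by ring
    linarith
  · -- overshoot case: 1 < ημ, then e n ≤ η²σ²L/2
    obtain ⟨m, rfl⟩ : ∃ m, n = m + 1 := ⟨n - 1, by omega⟩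
    have hb := hrec m (by omega)
    have hneg : (1 - η * μ) * e m ≤ 0 :=
      mul_nonpos_of_nonpos_of_nonneg (by linarith) (he m)
    have h1 : e (m + 1) ≤ η ^ 2 * σ ^ 2 * L / 2 := by linarith
    have hηle : η ≤ 1 / L := by
      rw [le_div_iff₀ hL]; linarith
    have h2 : η ^ 2 * σ ^ 2 * L / 2 ≤ η * σ ^ 2 / 2 := by
      nlinarith [mul_le_mul_of_nonneg_left hηL (by positivity : (0:ℝ) ≤ η * σ ^ 2)]
    have hηval : η * σ ^ 2 / 2 = (μ / L) * (Real.log A * (σ ^ 2 * L) / (2 * μ ^ 2 * ((m:ℝ)+1))) := by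
      rw [hη]
      have : ((m:ℝ)+1) = ((m+1 : ℕ) : ℝ) := by push_cast; ring
      field_simp
      push_cast; ring
    have hbase : (0:ℝ) < σ ^ 2 * L / (μ ^ 2 * ((m:ℝ)+1)) := by positivity
    have hcast : ((m+1 : ℕ) : ℝ) = (m:ℝ)+1 := by push_cast; ring
    rw [hcast] at hlogA_le hlogn hlogn0 ⊢
    set B : ℝ := σ ^ 2 * L / (μ ^ 2 * ((m:ℝ)+1)) with hB
    have hB0 : 0 ≤ B := le_of_lt hbase
    have hμL : (0:ℝ) < μ / L := by positivity
    have h3 : e (m+1) ≤ μ / L * ((1 + c / Real.log 2) * Real.log ((m:ℝ)+1) / 2) * B := by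
      have e2 : Real.log A * (σ ^ 2 * L) / (2 * μ ^ 2 * ((m:ℝ)+1))
          = Real.log A / 2 * B := by rw [hB]; field_simp
      rw [hηval, e2] at h2
      have hstep : Real.log A / 2 * B ≤ (1 + c / Real.log 2) * Real.log ((m:ℝ)+1) / 2 * B :=
        mul_le_mul_of_nonneg_right (by linarith) hB0
      have := mul_le_mul_of_nonneg_left hstep (le_of_lt hμL)
      calc e (m+1) ≤ η ^ 2 * σ ^ 2 * L / 2 := h1
        _ ≤ μ / L * (Real.log A / 2 * B) := h2
        _ ≤ μ / L * ((1 + c / Real.log 2) * Real.log ((m:ℝ)+1) / 2 * B) := this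
        _ = μ / L * ((1 + c / Real.log 2) * Real.log ((m:ℝ)+1) / 2) * B := by ring
    have hq : σ ^ 2 * L * Real.log ((m:ℝ)+1) / (μ ^ 2 * ((m:ℝ)+1))
        = Real.log ((m:ℝ)+1) * B := by rw [hB]; field_simp
    rw [hq]
    have hcc : 0 ≤ 1 + c / Real.log 2 := by positivity
    have ht1 : 0 ≤ 1 / Real.log 2 * (Real.log ((m:ℝ)+1) * B) := by
      apply mul_nonneg (by positivity) (mul_nonneg (le_of_lt hlogn0) hB0)
    have ht2 : 0 ≤ (1 + c / Real.log 2) / 2 * (Real.log ((m:ℝ)+1) * B) := by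
      apply mul_nonneg (by positivity) (mul_nonneg (le_of_lt hlogn0) hB0)
    have hfin : (1 / Real.log 2 + (1 + c / Real.log 2) * (1 + μ / L) / 2)
          * (Real.log ((m:ℝ)+1) * B)
        = 1 / Real.log 2 * (Real.log ((m:ℝ)+1) * B)
          + (1 + c / Real.log 2) / 2 * (Real.log ((m:ℝ)+1) * B)
          + μ / L * ((1 + c / Real.log 2) * Real.log ((m:ℝ)+1) / 2) * B := by ring
    linarith
end

section
/- Given reals A, r ≥ 0, s, n with 0 < s ≤ n, and the assumption n ≥ (6C²G²/μ)[log(1/δ) + s·log(2n/s)·(1 + log n)²] with C, G, μ, δ > 0, the bound M := C²(GB·log(1/δ)/n + G·r·[√(log(1/δ)/n) + √((s/n)·log(2n/s))·(1 + log n)])² satisfies M ≤ 3C²G²B²log²(1/δ)/n² + (μ/2)·r². -/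
open Real

private lemma sq_add_three_le (a b c : ℝ) :
    (a + b + c) ^ 2 ≤ 3 * (a ^ 2 + b ^ 2 + c ^ 2) := by
  nlinarith [sq_nonneg (a - b), sq_nonneg (b - c), sq_nonneg (a - c)]

/-- Key algebraic step bounding `M_t` in the proof of Theorem 3:
if `n ≥ (6C²G²/μ)[log(1/δ) + s log(2n/s)(1 + log n)²]`, then
`M := C²(GB log(1/δ)/n + Gr[√(log(1/δ)/n) + √((s/n)log(2n/s))(1+log n)])²`
satisfies `M ≤ 3C²G²B²log²(1/δ)/n² + (μ/2)r²`. -/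
theorem M_bound (C G B μ δ r s n : ℝ)
    (hC : 0 < C) (hG : 0 < G) (hB : 0 < B) (hμ : 0 < μ)
    (hδ0 : 0 < δ) (hδ1 : δ < 1) (hr : 0 ≤ r)
    (hs : 0 < s) (hsn : s ≤ n)
    (hn : n ≥ 6 * C ^ 2 * G ^ 2 / μ *
      (Real.log (1 / δ) + s * Real.log (2 * n / s) * (1 + Real.log n) ^ 2)) :
    C ^ 2 * (G * B * Real.log (1 / δ) / n +
        G * r * (Real.sqrt (Real.log (1 / δ) / n) +
          Real.sqrt (s / n * Real.log (2 * n / s)) * (1 + Real.log n))) ^ 2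
      ≤ 3 * C ^ 2 * G ^ 2 * B ^ 2 * Real.log (1 / δ) ^ 2 / n ^ 2
        + μ / 2 * r ^ 2 := by
  have hn0 : 0 < n := lt_of_lt_of_le hs hsn
  set L := Real.log (1 / δ) with hLdef
  set K := Real.log (2 * n / s) with hKdef
  set E := 1 + Real.log n with hEdef
  have hL : 0 < L := Real.log_pos (one_lt_one_div hδ0 hδ1)
  have hK : 0 ≤ K := Real.log_nonneg (by rw [le_div_iff₀ hs]; linarith)
  clear_value L K E
  have hLn : 0 ≤ L / n := by positivity
  have hKn : 0 ≤ s / n * K := by positivity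
  have hu : Real.sqrt (L / n) ^ 2 = L / n := Real.sq_sqrt hLn
  have hv : Real.sqrt (s / n * K) ^ 2 = s / n * K := Real.sq_sqrt hKn
  set u := Real.sqrt (L / n)
  set v := Real.sqrt (s / n * K)
  clear_value u v
  have hmuln : 6 * C ^ 2 * G ^ 2 * (L + s * K * E ^ 2) ≤ μ * n := by
    have h := mul_le_mul_of_nonneg_left hn hμ.le
    have e : μ * (6 * C ^ 2 * G ^ 2 / μ *
        (L + s * K * E ^ 2)) = 6 * C ^ 2 * G ^ 2 * (L + s * K * E ^ 2) := by
      field_simp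
    linarith [e ▸ h]
  have habs : 3 * C ^ 2 * G ^ 2 * (L / n + s / n * K * E ^ 2) ≤ μ / 2 := by
    have e : 3 * C ^ 2 * G ^ 2 * (L / n + s / n * K * E ^ 2)
        = 3 * C ^ 2 * G ^ 2 * (L + s * K * E ^ 2) / n := by
      field_simp
    rw [e, div_le_iff₀ hn0]
    linarith [hmuln]
  have habs' := mul_le_mul_of_nonneg_left habs (sq_nonneg r)
  calc C ^ 2 * (G * B * L / n + G * r * (u + v * E)) ^ 2
      = C ^ 2 * (G * B * L / n + G * r * u + G * r * (v * E)) ^ 2 := by ring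
    _ ≤ C ^ 2 * (3 * ((G * B * L / n) ^ 2 + (G * r * u) ^ 2
          + (G * r * (v * E)) ^ 2)) :=
        mul_le_mul_of_nonneg_left
          (sq_add_three_le (G * B * L / n) (G * r * u) (G * r * (v * E)))
          (sq_nonneg C)
    _ = 3 * C ^ 2 * G ^ 2 * B ^ 2 * L ^ 2 / n ^ 2
        + r ^ 2 * (3 * C ^ 2 * G ^ 2 * (L / n + s / n * K * E ^ 2)) := by
        have e1 : (G * r * u) ^ 2 = G ^ 2 * r ^ 2 * (L / n) := by
          rw [mul_pow, mul_pow, hu]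
        have e2 : (G * r * (v * E)) ^ 2 = G ^ 2 * r ^ 2 * (s / n * K * E ^ 2) := by
          rw [mul_pow, mul_pow, mul_pow, hv]
        rw [e1, e2]; field_simp; ring
    _ ≤ 3 * C ^ 2 * G ^ 2 * B ^ 2 * L ^ 2 / n ^ 2 + r ^ 2 * (μ / 2) := by
        linarith [habs']
    _ = 3 * C ^ 2 * G ^ 2 * B ^ 2 * L ^ 2 / n ^ 2 + μ / 2 * r ^ 2 := by ring
end

section
/- If F is γ-strongly convex with minimizer w_* and F(w_*) = 0, and w' = w - η∇F_S(w) with ‖∇F_S(w)‖ ≤ GB, ∇F L-Lipschitz, and ‖∇F(w) - ∇F_S(w)‖² ≤ (C²G²B²/n²) + (2C²G²(log(1/δ)+d·log n)/(γn))·2F(w) pointwise, and n ≥ 4C²G²(log(1/δ)+d·log n)/γ², then F(w') - F(w) ≤ ηC²G²B²/n² - (ηγ/2)F(w) + η²G²B²L/2. -/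
/-!
With `g = ∇F_S w`, the descent lemma for the `L`-smooth `F` gives
`F(w') - F(w) ≤ -η⟪∇F w, g⟫ + Lη²‖g‖²/2`, and `-2⟪a, b⟫ ≤ ‖a - b‖² - ‖a‖²` splits the inner
product into the gradient deviation and `‖∇F w‖²`. The sample-size condition makes the
`F(w)`-part of the deviation bound at most `γ F(w)`, while strong convexity gives the
Polyak–Łojasiewicz inequality `‖∇F w‖² ≥ 2γ F(w)`; the difference leaves `-ηγ F(w)/2`.
-/

open Real

section Descent

variable {E : Type*} [NormedAddCommGroup E] [InnerProductSpace ℝ E] [CompleteSpace E]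
  {F : E → ℝ} {L : ℝ}

theorem HasGradientAt.hasDerivAt_comp_add_smul {g x v : E} {t : ℝ}
    (hF : HasGradientAt F g (x + t • v)) :
    HasDerivAt (fun s : ℝ => F (x + s • v)) (inner ℝ g v) t := by
  have hline : HasDerivAt (fun s : ℝ => x + s • v) v t := by
    simpa using ((hasDerivAt_id t).smul_const v).const_add x
  exact hF.hasFDerivAt.comp_hasDerivAt t hline

theorem inner_gradient_add_smul_sub_le
    (hLip : ∀ w u, ‖gradient F w - gradient F u‖ ≤ L * ‖w - u‖) (x v : E) {t : ℝ}
    (ht : 0 ≤ t) :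
    inner ℝ (gradient F (x + t • v) - gradient F x) v ≤ L * t * ‖v‖ ^ 2 :=
  calc _ ≤ ‖gradient F (x + t • v) - gradient F x‖ * ‖v‖ := real_inner_le_norm _ _
    _ ≤ L * ‖(x + t • v) - x‖ * ‖v‖ := by gcongr; exact hLip _ _
    _ = L * t * ‖v‖ ^ 2 := by
      rw [add_sub_cancel_left, norm_smul, norm_of_nonneg ht]; ring

theorem le_add_inner_gradient_add_half_mul_sq (hF : Differentiable ℝ F)
    (hLip : ∀ w u, ‖gradient F w - gradient F u‖ ≤ L * ‖w - u‖) (x y : E) :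
    F y ≤ F x + inner ℝ (gradient F x) (y - x) + L / 2 * ‖y - x‖ ^ 2 := by
  set v := y - x
  -- mean value inequality for `φ`, whose derivative is at most `⟪∇F x, v⟫` on `t ≥ 0`
  set φ : ℝ → ℝ := fun t => F (x + t • v) - L / 2 * ‖v‖ ^ 2 * t ^ 2
  have hφ : ∀ t, HasDerivAt φ (inner ℝ (gradient F (x + t • v)) v - L * ‖v‖ ^ 2 * t) t := by
    intro t
    have hquad := (hasDerivAt_pow 2 t).const_mul (L / 2 * ‖v‖ ^ 2)
    exact (((hF _).hasGradientAt.hasDerivAt_comp_add_smul).sub hquad).congr_deriv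
      (by push_cast; ring)
  have hφ' : ∀ t ∈ interior (Set.Ici (0 : ℝ)), deriv φ t ≤ inner ℝ (gradient F x) v := by
    intro t ht
    rw [interior_Ici, Set.mem_Ioi] at ht
    have hinner := inner_gradient_add_smul_sub_le hLip x v ht.le
    rw [inner_sub_left] at hinner
    rw [(hφ t).deriv]
    linarith
  have hmvt := (convex_Ici 0).image_sub_le_mul_sub_of_deriv_le
    (fun t _ => (hφ t).continuousAt.continuousWithinAt)
    (fun t _ => (hφ t).differentiableAt.differentiableWithinAt) hφ' 0 Set.self_mem_Ici 1
    (Set.mem_Ici.2 zero_le_one) zero_le_one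
  simp only [φ, zero_smul, add_zero, one_smul, v, add_sub_cancel] at hmvt
  linarith

theorem le_sub_mul_inner_gradient_add (hF : Differentiable ℝ F)
    (hLip : ∀ w u, ‖gradient F w - gradient F u‖ ≤ L * ‖w - u‖) (x g : E) (η : ℝ) :
    F (x - η • g) ≤ F x - η * inner ℝ (gradient F x) g + L / 2 * η ^ 2 * ‖g‖ ^ 2 := by
  have h := le_add_inner_gradient_add_half_mul_sq hF hLip x (x - η • g)
  rwa [sub_sub_cancel_left, inner_neg_right, real_inner_smul_right, norm_neg, norm_smul,
    norm_eq_abs, mul_pow, sq_abs, ← sub_eq_add_neg, ← mul_assoc] at h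

end Descent

section InnerProduct

variable {E : Type*} [NormedAddCommGroup E] [InnerProductSpace ℝ E]

/-- Completing the square in `d`: this turns a strong-convexity lower bound into the
Polyak–Łojasiewicz inequality. -/
theorem neg_two_mul_mul_le_norm_sq {γ a : ℝ} (hγ : 0 ≤ γ) {g d : E}
    (h : a ≥ inner ℝ g d + γ / 2 * ‖d‖ ^ 2) : -(2 * γ * a) ≤ ‖g‖ ^ 2 := by
  have hsq : 0 ≤ ‖γ • d + g‖ ^ 2 := sq_nonneg _
  rw [norm_add_sq_real, real_inner_smul_left, real_inner_comm, norm_smul, norm_eq_abs, mul_pow,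
    sq_abs] at hsq
  nlinarith

theorem neg_inner_le_half_norm_sub_sq_sub (a b : E) :
    -inner ℝ a b ≤ (‖a - b‖ ^ 2 - ‖a‖ ^ 2) / 2 := by
  rw [norm_sub_sq_real]
  linarith [sq_nonneg ‖b‖]

end InnerProduct

theorem div_mul_two_mul_le_of_two_mul_le {a γ n x : ℝ} (hγ : 0 ≤ γ) (hn : 0 ≤ n) (hx : 0 ≤ x)
    (h : 2 * a ≤ γ ^ 2 * n) : a / (γ * n) * (2 * x) ≤ γ * x := by
  have hcoeff : a / (γ * n) ≤ γ / 2 :=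
    div_le_of_le_mul₀ (mul_nonneg hγ hn) (by positivity) (by linarith)
  nlinarith

theorem per_step_strongly_convex_general {k : ℕ}
    (F FS : EuclideanSpace ℝ (Fin k) → ℝ)
    (γ L C G B η δ : ℝ) (n d : ℕ)
    (hγ : 0 < γ) (hL : 0 < L) (hη : 0 < η)
    (hF : Differentiable ℝ F)
    (hSC : ∀ w u, F w - F u ≥ (inner ℝ (gradient F u) (w - u) : ℝ) + γ / 2 * ‖w - u‖ ^ 2)
    (wstar : EuclideanSpace ℝ (Fin k)) (hmin : ∀ w, F wstar ≤ F w)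
    (hzero : F wstar = 0)
    (hLip : ∀ w u, ‖gradient F w - gradient F u‖ ≤ L * ‖w - u‖)
    (w : EuclideanSpace ℝ (Fin k))
    (hFSb : ‖gradient FS w‖ ≤ G * B)
    (hdev : ‖gradient F w - gradient FS w‖ ^ 2
      ≤ C ^ 2 * G ^ 2 * B ^ 2 / (n : ℝ) ^ 2
        + 2 * C ^ 2 * G ^ 2 * (Real.log (1 / δ) + (d : ℝ) * Real.log n) / (γ * n)
          * (2 * F w))
    (hnbig : (n : ℝ) ≥ 4 * C ^ 2 * G ^ 2 * (Real.log (1 / δ) + (d : ℝ) * Real.log n) / γ ^ 2) :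
    F (w - η • gradient FS w) - F w
      ≤ η * C ^ 2 * G ^ 2 * B ^ 2 / (n : ℝ) ^ 2 - η * γ / 2 * F w
        + η ^ 2 * G ^ 2 * B ^ 2 * L / 2 := by
  set g := gradient FS w
  set Q := C ^ 2 * G ^ 2 * B ^ 2 / (n : ℝ) ^ 2
  have hFw : 0 ≤ F w := hzero ▸ hmin w
  have hPL : 2 * γ * F w ≤ ‖gradient F w‖ ^ 2 := by
    have := neg_two_mul_mul_le_norm_sq hγ.le (hSC wstar w)
    rwa [hzero, zero_sub, mul_neg, neg_neg] at this
  have hdev' : ‖gradient F w - g‖ ^ 2 ≤ Q + γ * F w := by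
    refine hdev.trans (add_le_add_right (div_mul_two_mul_le_of_two_mul_le hγ.le
      n.cast_nonneg hFw ?_) Q)
    rw [ge_iff_le, div_le_iff₀ (by positivity)] at hnbig
    linarith
  have hQ : 0 ≤ η * Q := by positivity
  calc F (w - η • g) - F w
      ≤ η * -inner ℝ (gradient F w) g + L / 2 * η ^ 2 * ‖g‖ ^ 2 := by
        linarith [le_sub_mul_inner_gradient_add hF hLip w g η]
    _ ≤ η * ((‖gradient F w - g‖ ^ 2 - ‖gradient F w‖ ^ 2) / 2)
        + L / 2 * η ^ 2 * (G * B) ^ 2 := by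
        gcongr
        exact neg_inner_le_half_norm_sub_sq_sub _ _
    _ ≤ η * ((Q + γ * F w - 2 * γ * F w) / 2) + L / 2 * η ^ 2 * (G * B) ^ 2 := by
        gcongr
    _ ≤ η * Q - η * γ / 2 * F w + η ^ 2 * G ^ 2 * B ^ 2 * L / 2 := by
        linear_combination hQ / 2
    _ = _ := by simp only [Q]; ring

/-- Per-step inequality in the proof of Theorem 6 (strongly convex case, after
the first epoch): if `F` is `γ`-strongly convex with minimizer `w_*`,
`F(w_*) = 0`, `∇F` is `L`-Lipschitz, `w' = w - η∇F_S(w)` with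
`‖∇F_S(w)‖ ≤ GB`, the gradient deviation at `w` satisfies
`‖∇F(w) - ∇F_S(w)‖² ≤ C²G²B²/n² + (2C²G²(log(1/δ) + d log n)/(γn))·2F(w)`,
and `n ≥ 4C²G²(log(1/δ) + d log n)/γ²`, then
`F(w') - F(w) ≤ ηC²G²B²/n² - (ηγ/2)F(w) + η²G²B²L/2`. -/
theorem per_step_strongly_convex {k : ℕ}
    (F FS : EuclideanSpace ℝ (Fin k) → ℝ)
    (γ L C G B η δ : ℝ) (n d : ℕ)
    (hγ : 0 < γ) (hL : 0 < L) (hC : 0 < C) (hG : 0 < G) (hB : 0 < B)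
    (hη : 0 < η) (hδ0 : 0 < δ) (hδ1 : δ < 1) (hn : 0 < n) (hd : 0 < d)
    (hF : Differentiable ℝ F)
    (hSC : ∀ w u, F w - F u ≥ (inner ℝ (gradient F u) (w - u) : ℝ) + γ / 2 * ‖w - u‖ ^ 2)
    (wstar : EuclideanSpace ℝ (Fin k)) (hmin : ∀ w, F wstar ≤ F w)
    (hzero : F wstar = 0)
    (hLip : ∀ w u, ‖gradient F w - gradient F u‖ ≤ L * ‖w - u‖)
    (w : EuclideanSpace ℝ (Fin k))
    (hFSb : ‖gradient FS w‖ ≤ G * B)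
    (hdev : ‖gradient F w - gradient FS w‖ ^ 2
      ≤ C ^ 2 * G ^ 2 * B ^ 2 / (n : ℝ) ^ 2
        + 2 * C ^ 2 * G ^ 2 * (Real.log (1 / δ) + (d : ℝ) * Real.log n) / (γ * n)
          * (2 * F w))
    (hnbig : (n : ℝ) ≥ 4 * C ^ 2 * G ^ 2 * (Real.log (1 / δ) + (d : ℝ) * Real.log n) / γ ^ 2) :
    F (w - η • gradient FS w) - F w
      ≤ η * C ^ 2 * G ^ 2 * B ^ 2 / (n : ℝ) ^ 2 - η * γ / 2 * F w
        + η ^ 2 * G ^ 2 * B ^ 2 * L / 2 :=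
  per_step_strongly_convex_general F FS γ L C G B η δ n d hγ hL hη hF hSC wstar hmin hzero hLip w
    hFSb hdev hnbig
end
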